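/- For fixed d ∈ [0,1] with d < 1/2, the TOPSIS utility u(d,s) = √((d-1)²+s²) - √(d²+s²) is strictly decreasing in s ∈ [0,1]; for fixed d > 1/2 it is strictly increasing in s ∈ [0,1]. -/

import Mathlib

open Real

/-! For `0 ≤ b < a` the difference `√(a + s²) - √(b + s²)` equals `(a - b) / (√(a + s²) + √(b + s²))`,
whose denominator grows with `s ≥ 0`. The TOPSIS utility is this difference with `{a, b} = {(d - 1)², d²}`,
and `(d - 1)² > d²` exactly when `d < 1/2`. -/

lemma sqrt_sub_sqrt_eq_div_add {x y : ℝ} (hx : 0 ≤ x) (hy : 0 ≤ y) (hxy : 0 < √x + √y) :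
    √x - √y = (x - y) / (√x + √y) := by
  rw [eq_div_iff hxy.ne']
  linear_combination sq_sqrt hx - sq_sqrt hy

lemma strictMonoOn_sqrt_add_sq {c : ℝ} (hc : 0 ≤ c) :
    StrictMonoOn (fun s : ℝ => √(c + s ^ 2)) (Set.Ici 0) := fun s₁ hs₁ s₂ _ hs =>
  sqrt_lt_sqrt (by positivity) (by gcongr)

lemma strictAntiOn_sqrt_add_sq_sub_sqrt_add_sq {a b : ℝ} (hb : 0 ≤ b) (hba : b < a) :
    StrictAntiOn (fun s : ℝ => √(a + s ^ 2) - √(b + s ^ 2)) (Set.Ici 0) := by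
  intro s₁ hs₁ s₂ hs₂ hs
  have ha : 0 < a := hb.trans_lt hba
  have hden_pos : 0 < √(a + s₁ ^ 2) + √(b + s₁ ^ 2) :=
    add_pos_of_pos_of_nonneg (sqrt_pos.mpr (by positivity)) (sqrt_nonneg _)
  have hden_lt : √(a + s₁ ^ 2) + √(b + s₁ ^ 2) < √(a + s₂ ^ 2) + √(b + s₂ ^ 2) :=
    add_lt_add (strictMonoOn_sqrt_add_sq ha.le hs₁ hs₂ hs) (strictMonoOn_sqrt_add_sq hb hs₁ hs₂ hs)
  dsimp only
  rw [sqrt_sub_sqrt_eq_div_add (by positivity) (by positivity) (hden_pos.trans hden_lt),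
    sqrt_sub_sqrt_eq_div_add (by positivity) (by positivity) hden_pos]
  rw [add_sub_add_right_eq_sub, add_sub_add_right_eq_sub]
  exact div_lt_div_of_pos_left (sub_pos.mpr hba) hden_pos hden_lt

theorem topsisUtility_monotone_in_s
    (u : ℝ → ℝ → ℝ)
    (hu : ∀ d s : ℝ, u d s = Real.sqrt ((d - 1) ^ 2 + s ^ 2) - Real.sqrt (d ^ 2 + s ^ 2)) :
    (∀ d : ℝ, d ∈ Set.Icc (0 : ℝ) 1 → d < 1 / 2 →
      ∀ s₁ s₂ : ℝ, s₁ ∈ Set.Icc (0 : ℝ) 1 → s₂ ∈ Set.Icc (0 : ℝ) 1 →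
        s₁ < s₂ → u d s₂ < u d s₁) ∧
    (∀ d : ℝ, d ∈ Set.Icc (0 : ℝ) 1 → 1 / 2 < d →
      ∀ s₁ s₂ : ℝ, s₁ ∈ Set.Icc (0 : ℝ) 1 → s₂ ∈ Set.Icc (0 : ℝ) 1 →
        s₁ < s₂ → u d s₁ < u d s₂) := by
  constructor
  · intro d _ hd s₁ s₂ hs₁ hs₂ hs
    rw [hu, hu]
    exact strictAntiOn_sqrt_add_sq_sub_sqrt_add_sq (sq_nonneg d) (by nlinarith) hs₁.1 hs₂.1 hs
  · intro d _ hd s₁ s₂ hs₁ hs₂ hs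
    rw [hu, hu]
    have := strictAntiOn_sqrt_add_sq_sub_sqrt_add_sq (a := d ^ 2) (sq_nonneg (d - 1))
      (by nlinarith) hs₁.1 hs₂.1 hs
    linarith
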